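/- arXiv:1101.5940 — 7 statements merged into one kernel-verified Lean document; each statement's English description precedes it below -/
import Mathlib

section
/- If a configuration σ of KSPM(D) admits transitions on two distinct columns i and j, i.e. σ →ᵢ σ' and σ →ⱼ σ'', then there exists a configuration σ''' with σ' →ⱼ σ''' and σ'' →ᵢ σ''' (diamond property). -/
/-- Effect of firing column `i` in KSPM(D), on height-difference configurations. -/
def step (D : ℕ) (σ : ℕ → ℕ) (i : ℕ) : ℕ → ℕ :=
  fun j =>
    if j = i then σ i - D
    else if j + 1 = i then σ j + (D - 1)
    else if j = i + D - 1 then σ j + 1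
    else σ j

/-- Transition on column `i`: `σ →ᵢ σ'`. -/
def KTrans (D : ℕ) (σ : ℕ → ℕ) (i : ℕ) (σ' : ℕ → ℕ) : Prop :=
  D ≤ σ i ∧ σ' = step D σ i

/-- A strategy (list of fired columns) is legal from `σ`. -/
def Legal (D : ℕ) : (ℕ → ℕ) → List ℕ → Prop
  | _, [] => True
  | σ, i :: s => D ≤ σ i ∧ Legal D (step D σ i) s

/-- Configuration obtained by applying a strategy. -/
def applyStrat (D : ℕ) : (ℕ → ℕ) → List ℕ → (ℕ → ℕ)
  | σ, [] => σ
  | σ, i :: s => applyStrat D (step D σ i) s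

/-- Reachability `σ →* σ'`. -/
def Reaches (D : ℕ) (σ σ' : ℕ → ℕ) : Prop :=
  ∃ s : List ℕ, Legal D σ s ∧ applyStrat D σ s = σ'

/-- A configuration is stable (a fixed point) if no transition is possible. -/
def Stable (D : ℕ) (σ : ℕ → ℕ) : Prop := ∀ i, σ i < D

/-- Initial configuration: `N` grains stacked on column 0 (height differences `(N,0,0,…)`). -/
def initConf (N : ℕ) : ℕ → ℕ := fun j => if j = 0 then N else 0

/-- `τ = π(N)`: the stable configuration reachable from `N` stacked grains. -/
def IsPi (D N : ℕ) (τ : ℕ → ℕ) : Prop := Reaches D (initConf N) τ ∧ Stable D τ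

/-- `σ^{↓0}`: add one grain on column 0. -/
def addGrain (σ : ℕ → ℕ) : ℕ → ℕ := Function.update σ 0 (σ 0 + 1)

/-- `s` is the leftmost (lexicographically minimal) strategy from `τ^{↓0}` to `τ'`. -/
def IsAvalancheFor (D : ℕ) (τ τ' : ℕ → ℕ) (s : List ℕ) : Prop :=
  Legal D (addGrain τ) s ∧ applyStrat D (addGrain τ) s = τ' ∧
    ∀ s' : List ℕ, Legal D (addGrain τ) s' → applyStrat D (addGrain τ) s' = τ' →
      ¬ List.Lex (· < ·) s' s

/-- `s` is the `k`-th avalanche: leftmost strategy from `π(k-1)^{↓0}` to `π(k)`. -/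
def IsAvalanche (D k : ℕ) (s : List ℕ) : Prop :=
  ∃ τ τ' : ℕ → ℕ, IsPi D (k - 1) τ ∧ IsPi D k τ' ∧ IsAvalancheFor D τ τ' s

/-- Position `t` (0-indexed) of strategy `s` is a peak: it exceeds all earlier fired columns. -/
def IsPeak (s : List ℕ) (t : ℕ) : Prop :=
  t < s.length ∧ ∀ t' < t, s.getD t' 0 < s.getD t 0

/-- Column `p` is a peak of `s`. -/
def IsPeakVal (s : List ℕ) (p : ℕ) : Prop :=
  ∃ t : ℕ, IsPeak s t ∧ s.getD t 0 = p

/-- Diamond property: transitions on two distinct columns can be completed to a common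
configuration. -/
theorem diamond_property (D : ℕ) (hD : 2 ≤ D) (σ σ' σ'' : ℕ → ℕ) (i j : ℕ) (hij : i ≠ j)
    (h1 : KTrans D σ i σ') (h2 : KTrans D σ j σ'') :
    ∃ σ''' : ℕ → ℕ, KTrans D σ' j σ''' ∧ KTrans D σ'' i σ''' := by
  obtain ⟨hi, rfl⟩ := h1
  obtain ⟨hj, rfl⟩ := h2
  refine ⟨step D (step D σ i) j, ⟨?_, rfl⟩, ?_, ?_⟩
  · simp only [step]; split_ifs <;> omega
  · simp only [step]; split_ifs <;> omega
  · funext k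
    simp only [step]
    split_ifs <;> omega
end

section
/- Let s⁰ and s¹ be two strategies applicable from the same configuration σ, leading to configurations σ⁰ and σ¹ respectively. Then σ⁰ = σ¹ if and only if for every column i the number of occurrences of i in s⁰ equals the number of occurrences of i in s¹. -/
lemma step_int (D : ℕ) (hD : 2 ≤ D) (σ : ℕ → ℕ) (i : ℕ) (h : D ≤ σ i) (j : ℕ) :
    (step D σ i j : ℤ) = (σ j : ℤ) - D * (if j = i then 1 else 0)
      + (D - 1) * (if j + 1 = i then 1 else 0)
      + (if D - 1 ≤ j ∧ j + 1 - D = i then 1 else 0) := by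
  unfold step
  split_ifs <;> first | omega | (subst_vars; omega) | (exfalso; omega)

set_option maxHeartbeats 1000000 in
lemma apply_count (D : ℕ) (hD : 2 ≤ D) : ∀ (s : List ℕ) (σ : ℕ → ℕ), Legal D σ s → ∀ j,
    (applyStrat D σ s j : ℤ) = (σ j : ℤ) - D * s.count j + (D - 1) * s.count (j + 1)
      + (if D - 1 ≤ j then (s.count (j + 1 - D) : ℤ) else 0) := by
  intro s
  induction s with
  | nil => intro σ _ j; simp [applyStrat]
  | cons i t ih =>
    rintro σ ⟨hle, hleg⟩ j
    show (applyStrat D (step D σ i) t j : ℤ) = _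
    rw [ih (step D σ i) hleg j, step_int D hD σ i hle j]
    simp only [List.count_cons, beq_iff_eq]
    push_cast
    split_ifs <;> first | ring1 | (exfalso; omega)

lemma count_bound (l : List ℕ) : ∃ N, ∀ j, N ≤ j → l.count j = 0 := by
  induction l with
  | nil => exact ⟨0, fun j _ => rfl⟩
  | cons a t ih =>
    obtain ⟨N, hN⟩ := ih
    refine ⟨max N (a + 1), fun j hj => ?_⟩
    simp only [List.count_cons, beq_iff_eq, hN j (le_trans (le_max_left _ _) hj)]
    have : a ≠ j := by omega
    simp [this]

/-- Two strategies from the same configuration lead to the same configuration iff each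
column occurs the same number of times in both. -/
theorem strategies_same_iff_same_counts (D : ℕ) (hD : 2 ≤ D) (σ : ℕ → ℕ)
    (s0 s1 : List ℕ) (h0 : Legal D σ s0) (h1 : Legal D σ s1) :
    applyStrat D σ s0 = applyStrat D σ s1 ↔ ∀ i : ℕ, s0.count i = s1.count i := by
  constructor
  · intro happ
    set d : ℕ → ℤ := fun j => (s0.count j : ℤ) - s1.count j with hd
    obtain ⟨N0, hN0⟩ := count_bound s0
    obtain ⟨N1, hN1⟩ := count_bound s1
    have hvan : ∀ j, max N0 N1 ≤ j → d j = 0 := by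
      intro j hj
      simp [hd, hN0 j (le_trans (le_max_left _ _) hj),
        hN1 j (le_trans (le_max_right _ _) hj)]
    have hrec : ∀ j, d j = D * d (j + D - 1) - (D - 1) * d (j + D) := by
      intro j
      have e0 := apply_count D hD s0 σ h0 (j + D - 1)
      have e1 := apply_count D hD s1 σ h1 (j + D - 1)
      have he : applyStrat D σ s0 (j + D - 1) = applyStrat D σ s1 (j + D - 1) := by
        rw [happ]
      have hc : D - 1 ≤ j + D - 1 := by omega
      have h1' : j + D - 1 + 1 - D = j := by omega
      have h2' : j + D - 1 + 1 = j + D := by omega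
      rw [if_pos hc, h1'] at e0 e1
      rw [h2'] at e0 e1
      have : (applyStrat D σ s0 (j + D - 1) : ℤ) = applyStrat D σ s1 (j + D - 1) := by
        exact_mod_cast congrArg (Nat.cast : ℕ → ℤ) he
      rw [e0, e1] at this
      simp only [hd]
      linarith
    have key : ∀ k j, max N0 N1 ≤ j + k → d j = 0 := by
      intro k
      induction k with
      | zero => intro j hj; exact hvan j (by omega)
      | succ k ih =>
        intro j hj
        by_cases h : max N0 N1 ≤ j
        · exact hvan j h
        · have ha := ih (j + D - 1) (by omega)
          have hb := ih (j + D) (by omega)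
          rw [hrec j, ha, hb]; ring
    intro i
    have := key (max N0 N1) i (by omega)
    simp only [hd] at this
    omega
  · intro hcount
    funext j
    have e0 := apply_count D hD s0 σ h0 j
    have e1 := apply_count D hD s1 σ h1 j
    have : (applyStrat D σ s0 j : ℤ) = applyStrat D σ s1 j := by
      rw [e0, e1, hcount j, hcount (j + 1)]
      by_cases h : D - 1 ≤ j
      · rw [if_pos h, if_pos h, hcount (j + 1 - D)]
      · rw [if_neg h, if_neg h]
    exact_mod_cast this
end

section
/- For every configuration σ of KSPM(D) obtained from a finite pile, there exists a unique stable configuration π(σ) reachable from σ, and moreover for any σ' reachable from σ one has π(σ') = π(σ). -/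
namespace KSPMAux

def R (D : ℕ) (σ σ' : ℕ → ℕ) : Prop := ∃ i, D ≤ σ i ∧ σ' = step D σ i

lemma reaches_iff (D : ℕ) (σ τ : ℕ → ℕ) :
    Reaches D σ τ ↔ Relation.ReflTransGen (R D) σ τ := by
  constructor
  · rintro ⟨s, hleg, happ⟩
    induction s generalizing σ with
    | nil => rw [show applyStrat D σ [] = σ from rfl] at happ; subst happ; exact .refl
    | cons i s ih =>
      obtain ⟨hi, hleg'⟩ := hleg
      exact .head ⟨i, hi, rfl⟩ (ih _ hleg' happ)
  · intro h
    induction h using Relation.ReflTransGen.head_induction_on with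
    | refl => exact ⟨[], trivial, rfl⟩
    | head hab _ ih =>
      obtain ⟨i, hi, heq⟩ := hab
      obtain ⟨s, hleg, happ⟩ := ih
      subst heq
      exact ⟨i :: s, ⟨hi, hleg⟩, happ⟩

lemma reaches_trans {D : ℕ} {a b c : ℕ → ℕ} (h1 : Reaches D a b) (h2 : Reaches D b c) :
    Reaches D a c := by
  rw [reaches_iff] at *
  exact h1.trans h2

lemma step_spec {D : ℕ} (f : ℕ → ℕ) (hD : 2 ≤ D) {σ : ℕ → ℕ} {i : ℕ} (hi : D ≤ σ i) (k : ℕ) :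
    f k * step D σ i k + (if k = i then f k * D else 0)
      = f k * σ k + (if k + 1 = i then f k * (D - 1) else 0)
        + (if k = i + D - 1 then f k * 1 else 0) := by
  unfold step
  by_cases h1 : k = i
  · subst h1
    rw [if_pos rfl, if_pos rfl, if_neg (by omega), if_neg (by omega),
      ← Nat.mul_add, Nat.sub_add_cancel hi]
    ring
  · rw [if_neg h1, if_neg h1]
    by_cases h2 : k + 1 = i
    · rw [if_pos h2, if_pos h2, if_neg (by omega), Nat.mul_add]
    · rw [if_neg h2, if_neg h2]
      by_cases h3 : k = i + D - 1
      · rw [if_pos h3, if_pos h3, Nat.mul_add]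
        ring
      · rw [if_neg h3, if_neg h3]

lemma step_apply_le {D : ℕ} {σ : ℕ → ℕ} {i j : ℕ} (hij : j ≠ i) : σ j ≤ step D σ i j := by
  unfold step
  rw [if_neg hij]
  split_ifs <;> omega

lemma step_comm {D : ℕ} (hD : 2 ≤ D) {σ : ℕ → ℕ} {i j : ℕ}
    (hi : D ≤ σ i) (hj : D ≤ σ j) (hij : i ≠ j) :
    step D (step D σ i) j = step D (step D σ j) i := by
  have hj' : D ≤ step D σ i j := le_trans hj (step_apply_le (Ne.symm hij))
  have hi' : D ≤ step D σ j i := le_trans hi (step_apply_le hij)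
  funext k
  have e1 := step_spec (fun _ => 1) hD hj' k
  have e2 := step_spec (fun _ => 1) hD hi k
  have e3 := step_spec (fun _ => 1) hD hi' k
  have e4 := step_spec (fun _ => 1) hD hj k
  simp only [one_mul] at e1 e2 e3 e4
  split_ifs at e1 e2 e3 e4 <;> omega

end KSPMAux

namespace KSPMAux

noncomputable section
open Finset

def wsum (M : ℕ) (f σ : ℕ → ℕ) : ℕ := ∑ j ∈ Finset.range M, f j * σ j

lemma step_wsum {D : ℕ} (f : ℕ → ℕ) (hD : 2 ≤ D) {σ : ℕ → ℕ} {i M : ℕ}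
    (hi : D ≤ σ i) (hM : i + D ≤ M) :
    wsum M f (step D σ i) + f i * D
      = wsum M f σ + (if i = 0 then 0 else f (i - 1) * (D - 1)) + f (i + D - 1) := by
  have h2 : (∑ j ∈ Finset.range M, if j = i then f j * D else 0) = f i * D := by
    rw [Finset.sum_ite_eq' (Finset.range M) i (fun j => f j * D),
      if_pos (Finset.mem_range.2 (by omega))]
  have h3 : (∑ j ∈ Finset.range M, if j + 1 = i then f j * (D - 1) else 0)
      = (if i = 0 then 0 else f (i - 1) * (D - 1)) := by
    rcases Nat.eq_zero_or_pos i with rfl | hipos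
    · simp
    · rw [if_neg (by omega)]
      have hcong : ∀ j, (if j + 1 = i then f j * (D - 1) else 0)
          = (if j = i - 1 then f j * (D - 1) else 0) := fun j => if_congr (by omega) rfl rfl
      rw [Finset.sum_congr rfl (fun j _ => hcong j),
        Finset.sum_ite_eq' (Finset.range M) (i - 1) (fun j => f j * (D - 1)),
        if_pos (Finset.mem_range.2 (by omega))]
  have h4 : (∑ j ∈ Finset.range M, if j = i + D - 1 then f j * 1 else 0) = f (i + D - 1) := by
    rw [Finset.sum_ite_eq' (Finset.range M) (i + D - 1) (fun j => f j * 1),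
      if_pos (Finset.mem_range.2 (by omega))]
    exact mul_one _
  calc wsum M f (step D σ i) + f i * D
      = ∑ j ∈ Finset.range M, (f j * step D σ i j + if j = i then f j * D else 0) := by
        rw [Finset.sum_add_distrib, h2]; rfl
    _ = ∑ j ∈ Finset.range M,
          (f j * σ j + (if j + 1 = i then f j * (D - 1) else 0)
            + (if j = i + D - 1 then f j * 1 else 0)) :=
        Finset.sum_congr rfl (fun j _ => step_spec f hD hi j)
    _ = wsum M f σ + (if i = 0 then 0 else f (i - 1) * (D - 1)) + f (i + D - 1) := by
        rw [Finset.sum_add_distrib, Finset.sum_add_distrib, h3, h4]; rfl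

def Inv (D N : ℕ) (σ : ℕ → ℕ) : Prop :=
  (∀ j, (D - 1) * N < j → σ j = 0) ∧
    (D - 1) * wsum ((D - 1) * N + D) (fun _ => 1) σ
      + wsum ((D - 1) * N + D) (fun j => j) σ ≤ (D - 1) * N

lemma arith1 (i D : ℕ) (h1 : 1 ≤ i) (hD : 2 ≤ D) :
    (i - 1) * (D - 1) + (i + D - 1) = i * D := by
  have h2 : 1 ≤ D := by omega
  have h3 : 1 ≤ i + D := by omega
  zify [h1, h2, h3]
  ring

lemma arith2 (i D : ℕ) (h1 : 1 ≤ i) (hD : 2 ≤ D) :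
    (i - 1) * (i - 1) * (D - 1) + (i + D - 1) * (i + D - 1)
      = i * i * D + (D - 1) + (D - 1) * (D - 1) := by
  have h2 : 1 ≤ D := by omega
  have h3 : 1 ≤ i + D := by omega
  zify [h1, h2, h3]
  ring

lemma inv_step {D N : ℕ} (hD : 2 ≤ D) {σ : ℕ → ℕ} {i : ℕ} (hinv : Inv D N σ) (hi : D ≤ σ i) :
    Inv D N (step D σ i) ∧
      wsum ((D - 1) * N + D) (fun j => j * j) σ + 1
        ≤ wsum ((D - 1) * N + D) (fun j => j * j) (step D σ i) := by
  obtain ⟨hbdd, hKey⟩ := hinv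
  have hiK : i ≤ (D - 1) * N := by
    by_contra hc
    have := hbdd i (by omega)
    omega
  have hM : i + D ≤ (D - 1) * N + D := by omega
  have hmass := step_wsum (fun _ => 1) hD hi hM
  have hmom := step_wsum (fun j => j) hD hi hM
  have hen := step_wsum (fun j => j * j) hD hi hM
  simp only [one_mul, mul_one] at hmass hmom hen
  have key2 : (D - 1) * wsum ((D - 1) * N + D) (fun _ => 1) (step D σ i)
        + wsum ((D - 1) * N + D) (fun j => j) (step D σ i) ≤ (D - 1) * N ∧
      wsum ((D - 1) * N + D) (fun j => j * j) σ + 1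
        ≤ wsum ((D - 1) * N + D) (fun j => j * j) (step D σ i) := by
    rcases Nat.eq_zero_or_pos i with rfl | hipos
    · norm_num at hmass hmom hen
      have hmass' : wsum ((D - 1) * N + D) (fun _ => 1) (step D σ 0) + (D - 1)
          = wsum ((D - 1) * N + D) (fun _ => 1) σ := by omega
      have hmom' : wsum ((D - 1) * N + D) (fun j => j) (step D σ 0)
          = wsum ((D - 1) * N + D) (fun j => j) σ + (D - 1) := by omega
      have hee : (D - 1) ≤ (D - 1) * (D - 1) := Nat.le_mul_of_pos_left _ (by omega)
      have hmm : (D - 1) * wsum ((D - 1) * N + D) (fun _ => 1) (step D σ 0)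
            + (D - 1) * (D - 1) = (D - 1) * wsum ((D - 1) * N + D) (fun _ => 1) σ := by
        rw [← Nat.mul_add, hmass']
      have hen' : wsum ((D - 1) * N + D) (fun j => j * j) (step D σ 0)
          = wsum ((D - 1) * N + D) (fun j => j * j) σ + (D - 1) * (D - 1) := by omega
      have hpos : 1 ≤ (D - 1) * (D - 1) := Nat.one_le_iff_ne_zero.2 (by
        have := Nat.mul_pos (show 0 < D - 1 by omega) (show 0 < D - 1 by omega)
        omega)
      constructor
      · linarith
      · linarith
    · rw [if_neg (by omega)] at hmass hmom hen
      have hmass' : wsum ((D - 1) * N + D) (fun _ => 1) (step D σ i)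
          = wsum ((D - 1) * N + D) (fun _ => 1) σ := by omega
      have hmom' : wsum ((D - 1) * N + D) (fun j => j) (step D σ i)
          = wsum ((D - 1) * N + D) (fun j => j) σ := by
        have := arith1 i D hipos hD
        linarith
      have hen' : wsum ((D - 1) * N + D) (fun j => j * j) (step D σ i)
          = wsum ((D - 1) * N + D) (fun j => j * j) σ + (D - 1) + (D - 1) * (D - 1) := by
        have := arith2 i D hipos hD
        linarith
      refine ⟨by rw [hmass', hmom']; exact hKey, by rw [hen']; omega⟩
  refine ⟨⟨?_, key2.1⟩, key2.2⟩
  intro j hj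
  by_cases hjM : j < (D - 1) * N + D
  · by_contra hne
    have h1 : 1 ≤ step D σ i j := Nat.pos_of_ne_zero hne
    have h2 : j * step D σ i j ≤ wsum ((D - 1) * N + D) (fun j => j) (step D σ i) :=
      Finset.single_le_sum (f := fun k => k * step D σ i k)
        (fun _ _ => Nat.zero_le _) (Finset.mem_range.2 hjM)
    have h3 : j ≤ j * step D σ i j := Nat.le_mul_of_pos_right _ h1
    have h4 : wsum ((D - 1) * N + D) (fun j => j) (step D σ i) ≤ (D - 1) * N :=
      le_trans (Nat.le_add_left _ _) key2.1
    exact absurd (le_trans h3 (le_trans h2 h4)) (not_le.2 hj)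
  · have hstep : step D σ i j = σ j := by
      unfold step
      rw [if_neg (by omega), if_neg (by omega), if_neg (by omega)]
    rw [hstep]
    exact hbdd j hj

lemma en_bound {D N : ℕ} (hD : 2 ≤ D) {σ : ℕ → ℕ} (hinv : Inv D N σ) :
    wsum ((D - 1) * N + D) (fun j => j * j) σ ≤ ((D - 1) * N) * ((D - 1) * N) := by
  have hmomK : wsum ((D - 1) * N + D) (fun j => j) σ ≤ (D - 1) * N :=
    le_trans (Nat.le_add_left _ _) hinv.2
  have h1 : ∀ j ∈ Finset.range ((D - 1) * N + D), j * j * σ j ≤ ((D - 1) * N) * (j * σ j) := by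
    intro j _
    by_cases h : σ j = 0
    · simp [h]
    · have hjK : j ≤ (D - 1) * N := by
        by_contra hc
        exact h (hinv.1 j (by omega))
      calc j * j * σ j = j * (j * σ j) := by ring
        _ ≤ ((D - 1) * N) * (j * σ j) := Nat.mul_le_mul_right _ hjK
  calc wsum ((D - 1) * N + D) (fun j => j * j) σ
      ≤ ∑ j ∈ Finset.range ((D - 1) * N + D), ((D - 1) * N) * (j * σ j) :=
        Finset.sum_le_sum h1
    _ = ((D - 1) * N) * wsum ((D - 1) * N + D) (fun j => j) σ := by
        rw [← Finset.mul_sum]; rfl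
    _ ≤ ((D - 1) * N) * ((D - 1) * N) := Nat.mul_le_mul_left _ hmomK

lemma inv_init {D : ℕ} (hD : 2 ≤ D) (N : ℕ) : Inv D N (initConf N) := by
  constructor
  · intro j hj
    unfold initConf
    rw [if_neg (by omega)]
  · have hmass : wsum ((D - 1) * N + D) (fun _ => 1) (initConf N) = N := by
      unfold wsum initConf
      simp only [one_mul]
      rw [Finset.sum_ite_eq' (Finset.range ((D - 1) * N + D)) 0 (fun _ => N),
        if_pos (Finset.mem_range.2 (by omega))]
    have hmom : wsum ((D - 1) * N + D) (fun j => j) (initConf N) = 0 := by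
      unfold wsum initConf
      apply Finset.sum_eq_zero
      intro j _
      by_cases h : j = 0 <;> simp [h]
    rw [hmass, hmom]
    simp

lemma inv_reaches {D N : ℕ} (hD : 2 ≤ D) :
    ∀ (s : List ℕ) (σ : ℕ → ℕ), Inv D N σ → Legal D σ s → Inv D N (applyStrat D σ s) := by
  intro s
  induction s with
  | nil => intro σ h _; exact h
  | cons i s ih => intro σ h hleg; exact ih _ (inv_step hD h hleg.1).1 hleg.2

lemma exists_stable {D N : ℕ} (hD : 2 ≤ D) :
    ∀ (n : ℕ) (σ : ℕ → ℕ), Inv D N σ →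
      ((D - 1) * N) * ((D - 1) * N) ≤ wsum ((D - 1) * N + D) (fun j => j * j) σ + n →
      ∃ τ, Reaches D σ τ ∧ Stable D τ := by
  intro n
  induction n with
  | zero =>
    intro σ hinv hbd
    by_cases hst : Stable D σ
    · exact ⟨σ, ⟨[], trivial, rfl⟩, hst⟩
    · exfalso
      unfold Stable at hst
      push_neg at hst
      obtain ⟨i, hi⟩ := hst
      obtain ⟨hinv', hen⟩ := inv_step hD hinv hi
      have := en_bound hD hinv'
      linarith
  | succ n ih =>
    intro σ hinv hbd
    by_cases hst : Stable D σ
    · exact ⟨σ, ⟨[], trivial, rfl⟩, hst⟩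
    · unfold Stable at hst
      push_neg at hst
      obtain ⟨i, hi⟩ := hst
      obtain ⟨hinv', hen⟩ := inv_step hD hinv hi
      obtain ⟨τ, ⟨s, hleg, happ⟩, hstab⟩ := ih (step D σ i) hinv' (by linarith)
      exact ⟨τ, ⟨i :: s, ⟨hi, hleg⟩, happ⟩, hstab⟩

end

lemma stable_eq {D : ℕ} {τ x : ℕ → ℕ} (hτ : Stable D τ)
    (h : Relation.ReflTransGen (R D) τ x) : x = τ := by
  rcases Relation.ReflTransGen.cases_head h with heq | ⟨c, ⟨i, hi, _⟩, _⟩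
  · exact heq.symm
  · exact absurd hi (not_le.2 (hτ i))

lemma diamond {D : ℕ} (hD : 2 ≤ D) : ∀ a b c, R D a b → R D a c →
    ∃ d, Relation.ReflGen (R D) b d ∧ Relation.ReflTransGen (R D) c d := by
  rintro a _ _ ⟨i, hi, rfl⟩ ⟨j, hj, rfl⟩
  rcases eq_or_ne i j with rfl | hij
  · exact ⟨step D a i, .refl, .refl⟩
  · exact ⟨step D (step D a i) j,
      .single ⟨j, le_trans hj (step_apply_le (Ne.symm hij)), rfl⟩,
      .single ⟨i, le_trans hi (step_apply_le hij), step_comm hD hi hj hij⟩⟩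

end KSPMAux

/-- From any configuration obtained from a finite pile, a unique stable configuration
is reachable, and every configuration reachable from σ stabilizes to the same one. -/
theorem unique_stabilization (D : ℕ) (hD : 2 ≤ D) (σ : ℕ → ℕ)
    (hfin : ∃ N : ℕ, Reaches D (initConf N) σ) :
    ∃ τ : ℕ → ℕ, (Reaches D σ τ ∧ Stable D τ) ∧
      (∀ τ' : ℕ → ℕ, Reaches D σ τ' → Stable D τ' → τ' = τ) ∧
      (∀ σ' τ' : ℕ → ℕ, Reaches D σ σ' → Reaches D σ' τ' → Stable D τ' → τ' = τ) := by
  classical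
  obtain ⟨N, hNσ⟩ := hfin
  have hinvσ : KSPMAux.Inv D N σ := by
    obtain ⟨s, hleg, happ⟩ := hNσ
    rw [← happ]
    exact KSPMAux.inv_reaches hD s _ (KSPMAux.inv_init hD N) hleg
  obtain ⟨τ, hreach, hstab⟩ :=
    KSPMAux.exists_stable hD (((D - 1) * N) * ((D - 1) * N)) σ hinvσ (Nat.le_add_left _ _)
  have huniq : ∀ τ' : ℕ → ℕ, Reaches D σ τ' → Stable D τ' → τ' = τ := by
    intro τ' hreach' hstab'
    obtain ⟨d, h1, h2⟩ := Relation.church_rosser (KSPMAux.diamond hD)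
      ((KSPMAux.reaches_iff D σ τ').1 hreach') ((KSPMAux.reaches_iff D σ τ).1 hreach)
    have e1 := KSPMAux.stable_eq hstab' h1
    have e2 := KSPMAux.stable_eq hstab h2
    rw [← e1, e2]
  exact ⟨τ, ⟨hreach, hstab⟩, huniq,
    fun σ' τ' h1 h2 h3 => huniq τ' (KSPMAux.reaches_trans h1 h2) h3⟩
end

section
/- Let π(N) be the stable configuration of KSPM(D) reached by the iterated process of adding N grains one at a time on column 0 and stabilizing, and let s be any strategy from π(N)^{↓0} (π(N) with one grain added on column 0) to π(N+1). Then every column is fired at most once in s: for all i, |s|ᵢ ∈ {0,1}. -/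
/-! A column `j` that has fired once has lost `D` grains and received at most `D` back: `D - 1`
from one firing of `j + 1`, and either `1` from one firing of `j + 1 - D` (if `j + 1 ≥ D`) or the
added grain (if `j = 0`), never both since `D ≥ 2`. Starting from a stable configuration, it is
therefore still below `D`; so as long as no column has fired twice, no column can fire a second
time. -/

/-- `σ` is obtained from `addGrain τ` by firing each column of `F` exactly once. -/
def FiredOnce (D : ℕ) (τ σ : ℕ → ℕ) (F : Finset ℕ) : Prop :=
  ∀ j, σ j + (if j ∈ F then D else 0) =
    addGrain τ j + (if j + 1 ∈ F then D - 1 else 0) +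
      (if D ≤ j + 1 ∧ j + 1 - D ∈ F then 1 else 0)

namespace FiredOnce

variable {D : ℕ} {τ σ : ℕ → ℕ} {F : Finset ℕ} {a : ℕ}

theorem empty (τ : ℕ → ℕ) : FiredOnce D τ (addGrain τ) ∅ := by
  intro j
  simp

theorem not_mem_of_le (hD : 2 ≤ D) (hτ : Stable D τ) (h : FiredOnce D τ σ F) (ha : D ≤ σ a) :
    a ∉ F := by
  have hσ := h a
  have hτa := hτ a
  simp only [addGrain, Function.update_apply] at hσ
  grind

theorem step (hD : 2 ≤ D) (hτ : Stable D τ) (h : FiredOnce D τ σ F) (ha : D ≤ σ a) :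
    FiredOnce D τ (_root_.step D σ a) (insert a F) := by
  have haF := h.not_mem_of_le hD hτ ha
  intro j
  have hσ := h j
  simp only [_root_.step, Finset.mem_insert]
  grind

theorem nodup_of_legal (hD : 2 ≤ D) (hτ : Stable D τ) {s : List ℕ} :
    ∀ {σ : ℕ → ℕ} {F : Finset ℕ}, FiredOnce D τ σ F → Legal D σ s →
      s.Nodup ∧ ∀ i ∈ s, i ∉ F := by
  induction s with
  | nil => simp
  | cons a s ih =>
    rintro σ F h ⟨ha, hs⟩
    obtain ⟨hnodup, hfresh⟩ := ih (h.step hD hτ ha) hs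
    refine ⟨List.nodup_cons.mpr ⟨fun has => hfresh a has (F.mem_insert_self a), hnodup⟩, ?_⟩
    rintro i (_ | ⟨_, his⟩)
    · exact h.not_mem_of_le hD hτ ha
    · exact fun hiF => hfresh i his (F.mem_insert_of_mem hiF)

end FiredOnce

theorem fired_at_most_once_general (D N : ℕ) (hD : 2 ≤ D) (τ : ℕ → ℕ)
    (hτ : IsPi D N τ) (s : List ℕ)
    (hleg : Legal D (addGrain τ) s) :
    ∀ i : ℕ, s.count i ≤ 1 :=
  List.nodup_iff_count_le_one.mp ((FiredOnce.empty τ).nodup_of_legal hD hτ.2 hleg).1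

/-- In any strategy from π(N) with one grain added on column 0 to π(N+1), each column is
fired at most once. -/
theorem fired_at_most_once (D N : ℕ) (hD : 2 ≤ D) (τ τ' : ℕ → ℕ)
    (hτ : IsPi D N τ) (hτ' : IsPi D (N + 1) τ') (s : List ℕ)
    (hleg : Legal D (addGrain τ) s) (happ : applyStrat D (addGrain τ) s = τ') :
    ∀ i : ℕ, s.count i ≤ 1 :=
  fired_at_most_once_general D N hD τ hτ s hleg
end

section
/- Let s be the k-th avalanche (the leftmost strategy from π(k−1)^{↓0} to π(k)) in KSPM(D), and let r_t = max{s_{t'} : t' ≤ t}. If s_{t+1} < r_t, then s_{t+1} is the largest column i < r_t not appearing in s_{[1,t]}, and r_t − s_{t+1} < D − 1. -/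
/-!
Let `u = s_{[1,t]}` be a prefix of the avalanche and `r` its maximum. By induction on `t`, every
firable unfired column `i < r` is the largest unfired column below `r` and satisfies
`r - i < D - 1`; moreover column `r - (D - 1)` has fired. Firing a column `j < r` can feed only
its left neighbour `j - 1`, which becomes the largest unfired column below `r`, and `r - (j - 1)`
reaches `D - 1` only if `j - 1 = r - (D - 1)`, which has fired. Firing a column `j > r` can
likewise only make `j - 1` firable below `j`, because leftmostness forces every column firable
before `j` to be `≥ j`; and `j` itself became firable only thanks to the grain from `j - (D - 1)`.
Columns never fire twice: a fired column regains at most `D - 1` grains from its right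
neighbour and one from column `j - (D - 1)`.
-/

section

variable {D : ℕ}

@[simp] lemma legal_cons (σ : ℕ → ℕ) (i : ℕ) (s : List ℕ) :
    Legal D σ (i :: s) ↔ D ≤ σ i ∧ Legal D (step D σ i) s := Iff.rfl

@[simp] lemma applyStrat_nil (σ : ℕ → ℕ) : applyStrat D σ [] = σ := rfl

@[simp] lemma applyStrat_cons (σ : ℕ → ℕ) (i : ℕ) (s : List ℕ) :
    applyStrat D σ (i :: s) = applyStrat D (step D σ i) s := rfl

lemma legal_append (σ : ℕ → ℕ) (u v : List ℕ) :
    Legal D σ (u ++ v) ↔ Legal D σ u ∧ Legal D (applyStrat D σ u) v := by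
  induction u generalizing σ with
  | nil => simp [Legal]
  | cons x u ih => simp [ih, and_assoc]

lemma applyStrat_append (σ : ℕ → ℕ) (u v : List ℕ) :
    applyStrat D σ (u ++ v) = applyStrat D (applyStrat D σ u) v := by
  induction u generalizing σ with
  | nil => rfl
  | cons x u ih => simp [ih]

lemma applyStrat_append_singleton (σ : ℕ → ℕ) (u : List ℕ) (j : ℕ) :
    applyStrat D σ (u ++ [j]) = step D (applyStrat D σ u) j := by
  rw [applyStrat_append]; rfl

lemma legal_append_singleton {σ : ℕ → ℕ} {u : List ℕ} {j : ℕ} :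
    Legal D σ (u ++ [j]) ↔ Legal D σ u ∧ D ≤ applyStrat D σ u j := by
  simp [legal_append, Legal]

lemma legal_of_prefix {σ : ℕ → ℕ} {u s : List ℕ} (hus : u <+: s) (hs : Legal D σ s) :
    Legal D σ u := by
  obtain ⟨v, rfl⟩ := hus
  exact ((legal_append σ u v).1 hs).1

lemma step_apply_of_ne (σ : ℕ → ℕ) {i j : ℕ} (h₁ : j ≠ i) (h₂ : j + 1 ≠ i)
    (h₃ : j ≠ i + D - 1) : step D σ i j = σ j := by
  simp [step, h₁, h₂, h₃]

lemma le_step_of_ne (σ : ℕ → ℕ) {i j : ℕ} (h : j ≠ i) : σ j ≤ step D σ i j := by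
  unfold step; split_ifs <;> omega

lemma le_applyStrat_of_not_mem (σ : ℕ → ℕ) {s : List ℕ} {i : ℕ} (hi : i ∉ s) :
    σ i ≤ applyStrat D σ s i := by
  induction s generalizing σ with
  | nil => rfl
  | cons x s ih =>
    rw [List.mem_cons, not_or] at hi
    exact (le_step_of_ne σ hi.1).trans (ih _ hi.2)

-- Grain balance at column `j`, written additively to avoid truncated subtraction.
lemma applyStrat_add_mul_count (hD : 2 ≤ D) {σ : ℕ → ℕ} {s : List ℕ} (h : Legal D σ s)
    (j : ℕ) :
    applyStrat D σ s j + D * s.count j =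
      σ j + (D - 1) * s.count (j + 1) + (if D - 1 ≤ j then s.count (j - (D - 1)) else 0) := by
  induction s generalizing σ with
  | nil => simp
  | cons i s ih =>
    obtain ⟨hi, hs⟩ := h
    have key := ih hs
    simp only [applyStrat_cons, List.count_cons, beq_iff_eq]
    generalize applyStrat D (step D σ i) s j = a at key ⊢
    unfold step at key
    split_ifs at key ⊢ <;> subst_vars <;> simp only [mul_add] <;> omega

lemma step_comm (hD : 2 ≤ D) (σ : ℕ → ℕ) {i x : ℕ} (hix : i ≠ x) (hi : D ≤ σ i)
    (hx : D ≤ σ x) : step D (step D σ i) x = step D (step D σ x) i := by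
  funext j
  unfold step
  split_ifs <;> omega

lemma legal_step_of_not_mem (hD : 2 ≤ D) {σ : ℕ → ℕ} {a : List ℕ} {i : ℕ} (ha : Legal D σ a)
    (hi : D ≤ σ i) (hia : i ∉ a) :
    Legal D (step D σ i) a ∧ applyStrat D (step D σ i) a = step D (applyStrat D σ a) i := by
  induction a generalizing σ with
  | nil => exact ⟨trivial, rfl⟩
  | cons x a ih =>
    rw [List.mem_cons, not_or] at hia
    obtain ⟨hx, ha⟩ := ha
    have hcomm := step_comm hD σ hia.1 hi hx
    obtain ⟨hleg, happ⟩ := ih ha ((le_step_of_ne σ hia.1).trans' hi) hia.2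
    refine ⟨⟨(le_step_of_ne σ (Ne.symm hia.1)).trans' hx, hcomm ▸ hleg⟩, ?_⟩
    rw [applyStrat_cons, hcomm, happ, applyStrat_cons]

lemma mem_of_le_of_stable {σ : ℕ → ℕ} {s : List ℕ} (hst : Stable D (applyStrat D σ s)) {i : ℕ}
    (hi : D ≤ σ i) : i ∈ s := by
  by_contra hmem
  exact absurd ((le_applyStrat_of_not_mem σ hmem).trans' hi) (hst i).not_ge

-- The first firing of `i` in `s` can be moved to the front (`legal_step_of_not_mem`).
lemma exists_append_applyStrat_eq (hD : 2 ≤ D) {σ : ℕ → ℕ} {s u : List ℕ}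
    (hs : Legal D σ s) (hst : Stable D (applyStrat D σ s)) (hu : Legal D σ u) :
    ∃ w, Legal D σ (u ++ w) ∧ applyStrat D σ (u ++ w) = applyStrat D σ s := by
  induction u generalizing σ s with
  | nil => exact ⟨s, hs, rfl⟩
  | cons i u ih =>
    obtain ⟨hi, hu⟩ := hu
    obtain ⟨a, b, rfl, hia⟩ := List.eq_append_cons_of_mem (mem_of_le_of_stable hst hi)
    rw [legal_append] at hs
    obtain ⟨ha, -, hb⟩ := hs
    obtain ⟨ha', happ⟩ := legal_step_of_not_mem hD ha hi hia
    have hab : applyStrat D (step D σ i) (a ++ b) = applyStrat D σ (a ++ i :: b) := by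
      rw [applyStrat_append, applyStrat_append, happ]; rfl
    obtain ⟨w, hw, hweq⟩ := ih (s := a ++ b) ((legal_append _ _ _).2 ⟨ha', happ ▸ hb⟩)
      (hab ▸ hst) hu
    exact ⟨w, ⟨hi, hw⟩, hweq.trans hab⟩

lemma List.take_append_getD_prefix {s : List ℕ} {t : ℕ} (ht : t < s.length) :
    s.take t ++ [s.getD t 0] <+: s := by
  rw [List.getD_eq_getElem _ _ ht, List.take_concat_get' s t ht]
  exact List.take_prefix _ _

lemma List.foldr_max_mem {l : List ℕ} (hl : l ≠ []) : l.foldr max 0 ∈ l :=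
  List.maximum_mem (by simpa using (List.foldr_max_of_ne_nil hl).symm)

lemma List.foldr_max_append_singleton (u : List ℕ) (j : ℕ) :
    (u ++ [j]).foldr max 0 = max (u.foldr max 0) j := by
  induction u with
  | nil => simp
  | cons x u ih => simp [ih, max_assoc]

/-- `u.foldr max 0` is the paper's `r_t` for the fired columns `u = s_{[1,t]}`. -/
structure BelowMaxInvariant (D : ℕ) (σ : ℕ → ℕ) (u : List ℕ) : Prop where
  sub_mem : 0 < u.foldr max 0 → u.foldr max 0 - (D - 1) ∈ u
  fireable : ∀ i, i ∉ u → i < u.foldr max 0 → D ≤ applyStrat D σ u i →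
    (∀ i', i' < u.foldr max 0 → i' ∉ u → i' ≤ i) ∧ u.foldr max 0 - i < D - 1

lemma belowMaxInvariant_of_foldr_max_eq_zero {σ : ℕ → ℕ} {u : List ℕ}
    (hu : u.foldr max 0 = 0) : BelowMaxInvariant D σ u where
  sub_mem h := absurd hu h.ne'
  fireable _ _ hi := absurd hu (Nat.ne_zero_of_lt hi)

/-- Firing `j` below the maximum feeds, below the maximum, only its left neighbour, which
becomes the largest unfired column there. -/
lemma BelowMaxInvariant.append_of_lt_foldr_max {σ : ℕ → ℕ} {u : List ℕ} {j : ℕ}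
    (hI : BelowMaxInvariant D σ u) (hju : j ∉ u) (hj : D ≤ applyStrat D σ u j)
    (hjr : j < u.foldr max 0) : BelowMaxInvariant D σ (u ++ [j]) := by
  obtain ⟨hjmax, hjgap⟩ := hI.fireable j hju hjr hj
  have hr : (u ++ [j]).foldr max 0 = u.foldr max 0 := by
    rw [List.foldr_max_append_singleton, max_eq_left hjr.le]
  constructor
  · rw [hr]
    exact fun h => List.mem_append_left _ (hI.sub_mem h)
  · intro i hi hir hfire
    rw [hr] at hir ⊢
    rw [List.mem_append, List.mem_singleton, not_or] at hi
    rw [applyStrat_append_singleton] at hfire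
    by_cases hij : i + 1 = j
    · refine ⟨fun i' hi' hi'u => ?_, ?_⟩
      · rw [List.mem_append, List.mem_singleton, not_or] at hi'u
        have := hjmax i' hi' hi'u.1
        omega
      · by_contra hgap
        have hi_eq : i = u.foldr max 0 - (D - 1) := by omega
        exact hi.1 (hi_eq ▸ hI.sub_mem (by omega))
    · rw [step_apply_of_ne _ hi.2 hij (by omega)] at hfire
      have := (hI.fireable i hi.1 hir hfire).1 j hjr hju
      have := hjmax i hir hi.1
      omega

section Avalanche

variable {τ τ' : ℕ → ℕ}

lemma addGrain_le (hτ : Stable D τ) (j : ℕ) : addGrain τ j ≤ D := by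
  rcases eq_or_ne j 0 with rfl | hj
  · simpa [addGrain] using hτ 0
  · simpa [addGrain, hj] using (hτ j).le

lemma addGrain_lt (hτ : Stable D τ) {j : ℕ} (hj : j ≠ 0) : addGrain τ j < D := by
  simpa [addGrain, hj] using hτ j

/-- Column `j` started with fewer than `D` grains (column `0` with `D`, but nothing feeds it
from the left), and regains at most `(D - 1) + 1` of the `D` grains it lost. -/
lemma not_mem_of_fireable (hD : 2 ≤ D) (hτ : Stable D τ) {u : List ℕ}
    (hu : Legal D (addGrain τ) u) (hnd : u.Nodup) {j : ℕ}
    (hj : D ≤ applyStrat D (addGrain τ) u j) : j ∉ u := by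
  intro hju
  have hbal := applyStrat_add_mul_count hD hu j
  rw [List.count_eq_one_of_mem hnd hju, mul_one] at hbal
  have h₁ : (D - 1) * u.count (j + 1) ≤ D - 1 :=
    mul_le_of_le_one_right' (List.nodup_iff_count_le_one.1 hnd _)
  have h₂ := List.nodup_iff_count_le_one.1 hnd (j - (D - 1))
  rcases eq_or_ne j 0 with rfl | hj0
  · have := addGrain_le hτ 0
    split_ifs at hbal <;> omega
  · have := addGrain_lt hτ hj0
    split_ifs at hbal <;> omega

lemma nodup_of_legal_addGrain (hD : 2 ≤ D) (hτ : Stable D τ) {s : List ℕ}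
    (hs : Legal D (addGrain τ) s) : s.Nodup := by
  induction s using List.reverseRecOn with
  | nil => exact List.nodup_nil
  | append_singleton u j ih =>
    obtain ⟨hu, hj⟩ := legal_append_singleton.1 hs
    have hnd := ih hu
    rw [← List.concat_eq_append, List.nodup_concat]
    exact ⟨not_mem_of_fireable hD hτ hu hnd hj, hnd⟩

/-- Column `j ≠ 0` started with fewer than `D` grains, so it needs the grain sent by
column `j - (D - 1)`. -/
lemma sub_mem_of_fireable (hD : 2 ≤ D) (hτ : Stable D τ) {u : List ℕ}
    (hu : Legal D (addGrain τ) u) {j : ℕ} (hj : D ≤ applyStrat D (addGrain τ) u j)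
    (hj0 : j ≠ 0) (hju : j ∉ u) (hj1u : j + 1 ∉ u) : j - (D - 1) ∈ u := by
  have hbal := applyStrat_add_mul_count hD hu j
  rw [List.count_eq_zero.2 hju, List.count_eq_zero.2 hj1u] at hbal
  have := addGrain_lt hτ hj0
  rw [← List.count_pos_iff]
  split_ifs at hbal <;> omega

/-- Otherwise firing `i` instead and completing by `exists_append_applyStrat_eq` gives a
lexicographically smaller strategy. -/
lemma IsAvalancheFor.le_of_fireable (hD : 2 ≤ D) (hτ' : Stable D τ') {s u : List ℕ} {i j : ℕ}
    (hs : IsAvalancheFor D τ τ' s) (hpre : u ++ [j] <+: s)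
    (hi : D ≤ applyStrat D (addGrain τ) u i) : j ≤ i := by
  obtain ⟨hleg, happ, hmin⟩ := hs
  obtain ⟨v, rfl⟩ := hpre
  by_contra! hij
  have hu : Legal D (addGrain τ) u := legal_of_prefix ⟨[j] ++ v, by simp⟩ hleg
  obtain ⟨w, hw, hweq⟩ := exists_append_applyStrat_eq hD hleg (happ ▸ hτ')
    (legal_append_singleton.2 ⟨hu, hi⟩)
  refine hmin _ hw (hweq.trans happ) ?_
  simpa using List.append_left_lt (l₁ := u) (List.Lex.rel hij : i :: w < j :: v)

/-- Firing `j` beyond the maximum makes at most its left neighbour firable below `j`: any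
other such column was firable before, and would have been fired instead of `j`. -/
lemma IsAvalancheFor.belowMaxInvariant_append_of_foldr_max_lt (hD : 2 ≤ D) (hτ : Stable D τ)
    (hτ' : Stable D τ') {s u : List ℕ} {j : ℕ} (hs : IsAvalancheFor D τ τ' s)
    (hpre : u ++ [j] <+: s) (hrj : u.foldr max 0 < j) :
    BelowMaxInvariant D (addGrain τ) (u ++ [j]) := by
  obtain ⟨hu, hj⟩ := legal_append_singleton.1 (legal_of_prefix hpre hs.1)
  have hr : (u ++ [j]).foldr max 0 = j := by
    rw [List.foldr_max_append_singleton, max_eq_right hrj.le]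
  have hsub : j - (D - 1) ∈ u := sub_mem_of_fireable hD hτ hu hj (by omega)
    (fun h => (List.le_max_of_le' 0 h le_rfl).not_gt hrj)
    (fun h => (List.le_max_of_le' 0 h le_rfl).not_gt (by omega))
  constructor
  · rw [hr]
    exact fun _ => List.mem_append_left _ hsub
  · intro i hi hij hfire
    rw [hr] at hij ⊢
    rw [List.mem_append, List.mem_singleton, not_or] at hi
    rw [applyStrat_append_singleton] at hfire
    by_cases hij1 : i + 1 = j
    · refine ⟨fun i' hi' _ => by omega, ?_⟩
      by_contra hgap
      exact hi.1 (show i = j - (D - 1) by omega ▸ hsub)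
    · rw [step_apply_of_ne _ hi.2 hij1 (by omega)] at hfire
      exact absurd (hs.le_of_fireable hD hτ' hpre hfire) hij.not_ge

lemma IsAvalancheFor.belowMaxInvariant (hD : 2 ≤ D) (hτ : Stable D τ) (hτ' : Stable D τ')
    {s : List ℕ} (hs : IsAvalancheFor D τ τ' s) :
    ∀ u, u <+: s → BelowMaxInvariant D (addGrain τ) u := by
  intro u
  induction u using List.reverseRecOn with
  | nil => exact fun _ => belowMaxInvariant_of_foldr_max_eq_zero rfl
  | append_singleton u j ih =>
    intro hpre
    have hI := ih ((List.prefix_append u [j]).trans hpre)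
    have hleg := legal_of_prefix hpre hs.1
    obtain ⟨hu, hj⟩ := legal_append_singleton.1 hleg
    have hju : j ∉ u := not_mem_of_fireable hD hτ hu (nodup_of_legal_addGrain hD hτ hu) hj
    rcases lt_trichotomy j (u.foldr max 0) with hjr | hjr | hrj
    · exact hI.append_of_lt_foldr_max hju hj hjr
    · have hu_nil : u = [] := by
        by_contra hne
        exact hju (hjr ▸ List.foldr_max_mem hne)
      subst hu_nil
      exact belowMaxInvariant_of_foldr_max_eq_zero (by simpa using hjr)
    · exact hs.belowMaxInvariant_append_of_foldr_max_lt hD hτ hτ' hpre hrj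

end Avalanche

end

theorem avalanche_below_max_general (D k : ℕ) (hD : 2 ≤ D) (s : List ℕ)
    (hs : IsAvalanche D k s) (t : ℕ) (ht : t < s.length)
    (r : ℕ) (hr : r = (s.take t).foldr max 0) (hlt : s.getD t 0 < r) :
    (s.getD t 0 ∉ s.take t ∧ ∀ i : ℕ, i < r → i ∉ s.take t → i ≤ s.getD t 0) ∧
      r - s.getD t 0 < D - 1 := by
  obtain ⟨τ, τ', ⟨-, hτ⟩, ⟨-, hτ'⟩, hs⟩ := hs
  have hpre := List.take_append_getD_prefix ht
  obtain ⟨hu, hj⟩ := legal_append_singleton.1 (legal_of_prefix hpre hs.1)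
  have hju := not_mem_of_fireable hD hτ hu (nodup_of_legal_addGrain hD hτ hu) hj
  have hI := hs.belowMaxInvariant hD hτ hτ' _ ((List.prefix_append _ _).trans hpre)
  subst hr
  obtain ⟨hmax, hgap⟩ := hI.fireable _ hju hlt hj
  exact ⟨⟨hju, hmax⟩, hgap⟩

/-- In an avalanche, a non-progress firing fires the largest not-yet-fired column below
the current maximum r, and lies at distance < D - 1 from it. -/
theorem avalanche_below_max (D k : ℕ) (hD : 2 ≤ D) (hk : 1 ≤ k) (s : List ℕ)
    (hs : IsAvalanche D k s) (t : ℕ) (ht0 : 0 < t) (ht : t < s.length)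
    (r : ℕ) (hr : r = (s.take t).foldr max 0) (hlt : s.getD t 0 < r) :
    (s.getD t 0 ∉ s.take t ∧ ∀ i : ℕ, i < r → i ∉ s.take t → i ≤ s.getD t 0) ∧
      r - s.getD t 0 < D - 1 :=
  avalanche_below_max_general D k hD s hs t ht r hr hlt
end

section
/- Let s be the k-th avalanche in KSPM(D) and r_t = max{s_{t'} : t' ≤ t}. If s_{t+1} > r_t, then s_{t+1} − r_t ≤ D − 1. -/
lemma legal_take (D : ℕ) : ∀ (s : List ℕ) (σ : ℕ → ℕ), Legal D σ s → ∀ t < s.length,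
    D ≤ applyStrat D σ (s.take t) (s.getD t 0)
  | [], _, _, t, ht => absurd ht (by simp)
  | i :: l, σ, ⟨h1, h2⟩, 0, _ => by simpa [applyStrat] using h1
  | i :: l, σ, ⟨h1, h2⟩, (t+1), ht => by
      simpa [applyStrat] using legal_take D l (step D σ i) h2 t (by simpa using ht)

lemma apply_unchanged (D : ℕ) (c : ℕ) : ∀ (l : List ℕ) (σ : ℕ → ℕ),
    (∀ i ∈ l, i < c ∧ i + D - 1 < c) → applyStrat D σ l c = σ c
  | [], σ, _ => rfl
  | i :: l, σ, h => by
      have hi := h i (by simp)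
      rw [applyStrat, apply_unchanged D c l _ (fun j hj => h j (by simp [hj]))]
      unfold step
      split_ifs <;> first | rfl | omega

lemma mem_le_foldr_max : ∀ (l : List ℕ) (a : ℕ), a ∈ l → a ≤ l.foldr max 0
  | i :: l, a, h => by
      rcases List.mem_cons.1 h with h | h
      · simp [h, le_max_iff]
      · exact le_trans (mem_le_foldr_max l a h) (by simp [le_max_iff])

/-- In an avalanche, a progress firing exceeds the current maximum r by at most D - 1. -/
theorem avalanche_above_max (D k : ℕ) (hD : 2 ≤ D) (hk : 1 ≤ k) (s : List ℕ)
    (hs : IsAvalanche D k s) (t : ℕ) (ht0 : 0 < t) (ht : t < s.length)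
    (r : ℕ) (hr : r = (s.take t).foldr max 0) (hgt : r < s.getD t 0) :
    s.getD t 0 - r ≤ D - 1 := by
  by_contra hcon
  obtain ⟨τ, τ', ⟨_, hstab⟩, _, hleg, _⟩ := hs
  set c := s.getD t 0 with hc
  have hrc : r + (D - 1) < c := by omega
  have h1 : D ≤ applyStrat D (addGrain τ) (s.take t) c := legal_take D s _ hleg t ht
  have h2 : applyStrat D (addGrain τ) (s.take t) c = addGrain τ c := by
    apply apply_unchanged
    intro i hi
    have := mem_le_foldr_max _ i hi
    rw [← hr] at this
    omega
  have hc0 : c ≠ 0 := by omega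
  rw [h2] at h1
  simp only [addGrain, Function.update_of_ne hc0] at h1
  exact absurd h1 (not_le.2 (hstab c))
end

section
/- Let s be the k-th avalanche of KSPM(D) with peak sequence (p₁,…,p_q), and suppose there is a column l with all of l,…,l+D−2 fired in s. Then for any column p ≥ l+D−1: p is a peak of s if and only if p ≤ p_q + D − 1 and π(k−1)_p = D−1. -/
/-!
Write `σ₀ = π(k-1)^{↓0}`. Firing `i` moves `D - 1` grains to `i - 1` and one to `i + D - 1`, so
after a legal strategy `u` the height of column `j` is
`σ₀ j + (D - 1) #u(j + 1) + #u(j + 1 - D) - D #u(j)`; since `σ₀ ≤ D`, no column fires twice.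
Leftmostness means that when `c` fires no smaller column is fireable, so a column fired after a
larger one was fed in between. Chasing feeders shows that no column fires after one at distance
`≥ D - 1` above it, and that once a column `b > p` has fired, everything fired before `p` is `≥ p`.
A block of `D - 1` fired columns propagates up to `p_q`: a gap `j` would leave the `D` columns
`j, …, j + D - 1` unfired, and the first column fired above `j` cannot be fed across them.
A peak `p` can only have been fed by `p + 1 - D`, which forces `π(k-1)_p = D - 1`. Conversely, if
`π(k-1)_p = D - 1` and `p + 1 - D ≤ p_q` then `p + 1 - D` fires, hence so does `p`; if a larger
column fired before `p`, then `p + 1 - D` could fire neither before it (`p` would have been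
fireable), nor between it and `p`, nor after `p`.
-/

namespace KSPM

theorem exists_eq_append_and_forall_not {α : Type*} {P : α → Prop} [DecidablePred P]
    {s : List α} (h : ∃ x ∈ s, P x) : ∃ u c v, s = u ++ c :: v ∧ P c ∧ ∀ x ∈ u, ¬ P x := by
  obtain ⟨c, hc⟩ := Option.isSome_iff_exists.1
    (List.find?_isSome (p := fun x => decide (P x)).2 (by simpa using h))
  obtain ⟨hPc, u, v, rfl, hu⟩ := List.find?_eq_some_iff_append.1 hc
  exact ⟨u, c, v, rfl, by simpa using hPc, fun x hx => by simpa using hu x hx⟩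

theorem not_mem_of_nodup_of_eq_append {s u v : List ℕ} {c : ℕ} (hs : s.Nodup)
    (h : s = u ++ c :: v) : c ∉ u := by
  subst h
  exact fun hc => (List.nodup_cons.1 (List.nodup_middle.1 hs)).1 (List.mem_append_left v hc)

theorem isPeakVal_iff_exists_eq_append {s : List ℕ} {p : ℕ} :
    IsPeakVal s p ↔ ∃ u v, s = u ++ p :: v ∧ ∀ x ∈ u, x < p := by
  constructor
  · rintro ⟨t, ⟨ht, hpeak⟩, rfl⟩
    rw [List.getD_eq_getElem _ _ ht] at hpeak ⊢
    refine ⟨s.take t, s.drop (t + 1), ?_, fun x hx => ?_⟩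
    · rw [← List.drop_eq_getElem_cons ht, List.take_append_drop]
    · obtain ⟨t', ht', rfl⟩ := List.mem_take_iff_getElem.1 hx
      have hlt := hpeak t' (lt_of_lt_of_le ht' (min_le_left _ _))
      rwa [List.getD_eq_getElem _ _ (lt_of_lt_of_le ht' (min_le_right _ _))] at hlt
  · rintro ⟨u, v, rfl, hu⟩
    have hp : (u ++ p :: v).getD u.length 0 = p := by simp
    refine ⟨u.length, ⟨by simp, fun t' ht' => ?_⟩, hp⟩
    rw [hp, List.getD_append _ _ _ _ ht', List.getD_eq_getElem _ _ ht']
    exact hu _ (List.getElem_mem ht')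

variable {D : ℕ} {σ τ τ' : ℕ → ℕ} {s u v w : List ℕ}

theorem applyStrat_append :
    applyStrat D σ (u ++ v) = applyStrat D (applyStrat D σ u) v := by
  induction u generalizing σ with
  | nil => rfl
  | cons a u ih => exact ih

theorem legal_append :
    Legal D σ (u ++ v) ↔ Legal D σ u ∧ Legal D (applyStrat D σ u) v := by
  induction u generalizing σ with
  | nil => simp [Legal, applyStrat]
  | cons a u ih => simp [Legal, applyStrat, ih, and_assoc]

theorem legal_of_eq_append (hs : Legal D σ s) (h : s = u ++ v) :
    Legal D σ u := by
  subst h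
  exact (legal_append.1 hs).1

theorem le_applyStrat_of_eq_append {c : ℕ} (hs : Legal D σ s)
    (h : s = u ++ c :: v) : D ≤ applyStrat D σ u c := by
  subst h
  exact (legal_append.1 hs).2.1

theorem step_apply_of_ne {i j : ℕ} (hi : j ≠ i) (hi1 : j + 1 ≠ i)
    (hiD : j ≠ i + D - 1) : step D σ i j = σ j := by
  simp [step, hi, hi1, hiD]

theorem le_step {i j : ℕ} (h : j ≠ i) : σ j ≤ step D σ i j := by
  simp only [step, if_neg h]; split_ifs <;> omega

theorem step_comm {a b : ℕ} (hab : a ≠ b) (ha : D ≤ σ a) (hb : D ≤ σ b) :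
    step D (step D σ a) b = step D (step D σ b) a := by
  funext j
  simp only [step]
  split_ifs <;> omega

theorem step_add_mul_ite {i : ℕ} (hD : 2 ≤ D) (hi : D ≤ σ i) (j : ℕ) :
    step D σ i j + D * (if i = j then 1 else 0) =
      σ j + (D - 1) * (if i = j + 1 then 1 else 0) +
        if D ≤ j + 1 then (if i = j + 1 - D then 1 else 0) else 0 := by
  simp only [step]
  split_ifs <;> subst_vars <;> omega

theorem applyStrat_apply_of_forall_ne {j : ℕ}
    (h : ∀ i ∈ u, i ≠ j ∧ i ≠ j + 1 ∧ i + D - 1 ≠ j) : applyStrat D σ u j = σ j := by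
  induction u generalizing σ with
  | nil => rfl
  | cons i u ih =>
    obtain ⟨hij, hij1, hijD⟩ := h i List.mem_cons_self
    simp only [applyStrat]
    rw [ih fun k hk => h k (List.mem_cons_of_mem i hk)]
    exact step_apply_of_ne (Ne.symm hij) (Ne.symm hij1) (Ne.symm hijD)

theorem le_applyStrat_of_not_mem {j : ℕ} (hj : j ∉ u) :
    σ j ≤ applyStrat D σ u j := by
  induction u generalizing σ with
  | nil => exact le_rfl
  | cons i u ih =>
    rw [List.mem_cons, not_or] at hj
    exact (le_step hj.1).trans (ih hj.2)

theorem legal_cons_erase_and_applyStrat_eq {b : ℕ}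
    (hw : Legal D σ w) (hbw : b ∈ w) (hb : D ≤ σ b) :
    Legal D σ (b :: w.erase b) ∧ applyStrat D σ (b :: w.erase b) = applyStrat D σ w := by
  induction w generalizing σ with
  | nil => cases hbw
  | cons a w ih =>
    by_cases hab : a = b
    · subst hab
      simpa using hw
    obtain ⟨ha, hw⟩ := hw
    have hbw : b ∈ w := (List.mem_cons.1 hbw).resolve_left (Ne.symm hab)
    obtain ⟨⟨-, hleg⟩, happ⟩ := ih hw hbw ((le_step (Ne.symm hab)).trans' hb)
    have hcomm := step_comm hab ha hb
    rw [List.erase_cons_tail (by simpa using hab)]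
    refine ⟨⟨hb, (le_step hab).trans' ha, ?_⟩, ?_⟩
    · rwa [← hcomm]
    · simp only [applyStrat] at happ ⊢
      rwa [← hcomm]

theorem applyStrat_add_mul_count (hD : 2 ≤ D) (hu : Legal D σ u)
    (j : ℕ) :
    applyStrat D σ u j + D * u.count j =
      σ j + (D - 1) * u.count (j + 1) + if D ≤ j + 1 then u.count (j + 1 - D) else 0 := by
  induction u generalizing σ with
  | nil => simp [applyStrat]
  | cons i u ih =>
    have hstep := step_add_mul_ite hD hu.1 j
    have hrest := ih hu.2
    simp only [applyStrat, List.count_cons, beq_iff_eq, Nat.mul_add] at hstep hrest ⊢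
    split_ifs at hstep hrest ⊢ <;> omega

theorem addGrain_of_ne_zero {j : ℕ} (hj : j ≠ 0) : addGrain τ j = τ j :=
  Function.update_of_ne hj _ _

theorem addGrain_le (j : ℕ) : addGrain τ j ≤ τ j + 1 := by
  rcases eq_or_ne j 0 with rfl | hj
  · simp [addGrain]
  · rw [addGrain_of_ne_zero (τ := τ) hj]; omega

theorem nodup_of_legal (hD : 2 ≤ D) (hτ : Stable D τ) (hu : Legal D (addGrain τ) u) :
    u.Nodup := by
  induction u using List.reverseRecOn with
  | nil => exact List.nodup_nil
  | append_singleton u c ih =>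
    rw [legal_append] at hu
    have hnd := ih hu.1
    refine List.nodup_append.2 ⟨hnd, List.nodup_singleton c, ?_⟩
    rintro a ha b hb rfl
    rw [List.mem_singleton] at hb
    subst hb
    have hfire : D ≤ applyStrat D (addGrain τ) u a := hu.2.1
    have hh := applyStrat_add_mul_count hD hu.1 a
    have h1 : D ≤ D * u.count a := Nat.le_mul_of_pos_right D (List.count_pos_iff.2 ha)
    have h2 : (D - 1) * u.count (a + 1) ≤ D - 1 :=
      mul_le_of_le_one_right (Nat.zero_le _) (List.nodup_iff_count_le_one.1 hnd _)
    have h3 := List.nodup_iff_count_le_one.1 hnd (a + 1 - D)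
    have h4 := addGrain_le (τ := τ) a
    have h5 := hτ a
    rcases eq_or_ne a 0 with rfl | ha0
    · rw [if_neg (by omega)] at hh
      omega
    · rw [addGrain_of_ne_zero ha0] at hh
      split_ifs at hh <;> omega

theorem applyStrat_addGrain_of_not_mem (hD : 2 ≤ D) (hu : Legal D (addGrain τ) u) {c : ℕ}
    (hc : c ∉ u) (hc0 : c ≠ 0) (hcD : D ≤ c + 1) :
    applyStrat D (addGrain τ) u c = τ c + (D - 1) * u.count (c + 1) + u.count (c + 1 - D) := by
  have h := applyStrat_add_mul_count hD hu c
  rwa [List.count_eq_zero.2 hc, if_pos hcD, addGrain_of_ne_zero hc0, Nat.mul_zero,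
    Nat.add_zero] at h

-- Otherwise firing `b` first would give a lexicographically smaller strategy to `τ'`.
theorem applyStrat_lt_of_lt (hτ' : Stable D τ') (hs : IsAvalancheFor D τ τ' s) {b c : ℕ}
    (h : s = u ++ c :: v) (hbc : b < c) : applyStrat D (addGrain τ) u b < D := by
  obtain ⟨hleg, happ, hmin⟩ := hs
  by_contra! hb
  subst h
  rw [legal_append] at hleg
  rw [applyStrat_append] at happ
  have hbmem : b ∈ c :: v := by
    by_contra hbn
    have hle : applyStrat D (addGrain τ) u b ≤ τ' b := happ ▸ le_applyStrat_of_not_mem hbn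
    exact absurd (hτ' b) (by omega)
  obtain ⟨hleg', happ'⟩ := legal_cons_erase_and_applyStrat_eq hleg.2 hbmem hb
  exact hmin (u ++ b :: (c :: v).erase b) (legal_append.2 ⟨hleg.1, hleg'⟩)
    (by rw [applyStrat_append, happ', happ]) (List.Lex.append_left _ (List.Lex.rel hbc) u)

-- `i = y + 1 ∨ i + D - 1 = y` says that firing `i` sends grains to `y`.
theorem exists_feeds_of_lt (hD : 2 ≤ D) (hτ : Stable D τ) (hs : Legal D (addGrain τ) s)
    {y : ℕ} (h : s = u ++ w ++ y :: v) (hy : applyStrat D (addGrain τ) u y < D) :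
    ∃ i ∈ w, i = y + 1 ∨ i + D - 1 = y := by
  have hyw : y ∉ w := fun hyw =>
    not_mem_of_nodup_of_eq_append (nodup_of_legal hD hτ hs) h (List.mem_append_right u hyw)
  have hfire := le_applyStrat_of_eq_append hs h
  by_contra! hnone
  rw [applyStrat_append, applyStrat_apply_of_forall_ne fun i hi =>
    ⟨by rintro rfl; exact hyw hi, hnone i hi⟩] at hfire
  omega

theorem exists_feeds_of_ne_zero (hD : 2 ≤ D) (hτ : Stable D τ) (hs : Legal D (addGrain τ) s)
    {c : ℕ} (h : s = u ++ c :: v) (hc : c ≠ 0) : ∃ i ∈ u, i = c + 1 ∨ i + D - 1 = c :=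
  exists_feeds_of_lt hD hτ hs (u := []) (by simpa using h)
    (by simpa [applyStrat, addGrain_of_ne_zero hc] using hτ c)

theorem pairwise_lt_add (hD : 2 ≤ D) (hτ : Stable D τ) (hτ' : Stable D τ')
    (hs : IsAvalancheFor D τ τ' s) : s.Pairwise fun x y => x < y + (D - 1) := by
  have hnd := nodup_of_legal hD hτ hs.1
  suffices ∀ u v, s = u ++ v → u.Pairwise fun x y => x < y + (D - 1) by
    simpa using this s [] (by simp)
  intro u
  induction u using List.reverseRecOn with
  | nil => simp
  | append_singleton u y ih =>
    intro v h
    have hu := ih (y :: v) (by simpa using h)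
    refine List.pairwise_append.2 ⟨hu, List.pairwise_singleton _ _, fun x hx y' hy' => ?_⟩
    rw [List.mem_singleton] at hy'
    subst y'
    by_contra! hxy
    obtain ⟨u₁, w, rfl⟩ := List.append_of_mem hx
    have hs' : s = u₁ ++ x :: w ++ y :: v := by simpa using h
    rw [List.pairwise_append, List.pairwise_cons] at hu
    obtain ⟨-, ⟨hx_w, -⟩, hu₁_xw⟩ := hu
    obtain ⟨i, hi, hfeed⟩ := exists_feeds_of_lt hD hτ hs.1 hs'
      (applyStrat_lt_of_lt hτ' hs (by simpa using hs') (by omega))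
    rcases hfeed with rfl | hfeed
    · have hx_eq : x = y + (D - 1) := by
        rcases List.mem_cons.1 hi with hix | hiw
        · omega
        · have := hx_w _ hiw
          omega
      obtain ⟨j, hj, hfeed'⟩ := exists_feeds_of_ne_zero hD hτ hs.1
        (by simpa using hs' : s = u₁ ++ x :: (w ++ y :: v)) (by omega)
      have hyu₁ : y ∉ u₁ := fun hy =>
        not_mem_of_nodup_of_eq_append hnd hs' (List.mem_append_left _ hy)
      have := hu₁_xw j hj _ hi
      rcases hfeed' with hj' | hj'
      · omega
      · exact hyu₁ (by rwa [show j = y by omega] at hj)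
    · rcases List.mem_cons.1 hi with rfl | hiw
      · omega
      · have := hx_w _ hiw
        omega

theorem le_of_mem_of_not_mem (hD : 2 ≤ D) (hτ : Stable D τ) (hτ' : Stable D τ')
    (hs : IsAvalancheFor D τ τ' s) {b p : ℕ} (h : s = u ++ b :: w ++ v) (hpb : p < b)
    (hpw : p ∉ w) : ∀ x ∈ w, p ≤ x := by
  induction w using List.reverseRecOn generalizing v with
  | nil => simp
  | append_singleton w y ih =>
    have hw := ih (v := y :: v) (by simpa using h) (fun h' => hpw (List.mem_append_left _ h'))
    intro x hx
    rcases List.mem_append.1 hx with hxw | hxy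
    · exact hw x hxw
    rw [List.mem_singleton] at hxy
    subst hxy
    by_contra! hxp
    obtain ⟨i, hi, hfeed⟩ := exists_feeds_of_lt hD hτ hs.1 (u := u) (w := b :: w)
      (by simpa using h) (applyStrat_lt_of_lt hτ' hs (by simpa using h) (by omega))
    rcases List.mem_cons.1 hi with rfl | hiw
    · omega
    · have := hw i hiw
      rcases hfeed with rfl | hfeed
      · exact hpw (List.mem_append_left _ (by rwa [show x + 1 = p by omega] at hiw))
      · omega

theorem succ_not_mem_of_not_mem (hD : 2 ≤ D) (hs : Legal D (addGrain τ) s)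
    (hfin : Stable D (applyStrat D (addGrain τ) s)) {c : ℕ} (hc : c ∉ s) (hc0 : c ≠ 0)
    (hcD : D ≤ c + 1) (hfed : c + 1 - D ∈ s) : c + 1 ∉ s := by
  intro hc1
  have h := applyStrat_addGrain_of_not_mem hD hs hc hc0 hcD
  have h1 : D - 1 ≤ (D - 1) * s.count (c + 1) :=
    Nat.le_mul_of_pos_right _ (List.count_pos_iff.2 hc1)
  have h2 := List.count_pos_iff.2 hfed
  have := hfin c
  omega

theorem mem_of_le_of_le (hD : 2 ≤ D) (hτ : Stable D τ) (hs : Legal D (addGrain τ) s)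
    (hfin : Stable D (applyStrat D (addGrain τ) s)) {l m : ℕ}
    (hl : ∀ i, l ≤ i → i < l + D - 1 → i ∈ s) (hm : m ∈ s) : ∀ j, l ≤ j → j ≤ m → j ∈ s := by
  intro j
  induction j using Nat.strong_induction_on with
  | _ j IH =>
  intro hlj hjm
  by_cases hj : j < l + D - 1
  · exact hl j hlj hj
  by_contra hjs
  have hwindow : ∀ i ≤ D - 1, j + i ∉ s := by
    intro i
    induction i with
    | zero => exact fun _ => hjs
    | succ i ih =>
      intro hi
      rw [← Nat.add_assoc]
      exact succ_not_mem_of_not_mem hD hs hfin (ih (by omega)) (by omega) (by omega)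
        (IH _ (by omega) (by omega) (by omega))
  obtain ⟨u, c, v, hsuv, hjc, hu⟩ := exists_eq_append_and_forall_not (P := (j < ·))
    ⟨m, hm, lt_of_le_of_ne hjm (by rintro rfl; exact hjs hm)⟩
  obtain ⟨i, hi, hfeed⟩ := exists_feeds_of_ne_zero hD hτ hs hsuv (by omega)
  have := hu i hi
  have hc : c ∈ s := hsuv ▸ List.mem_append_right u List.mem_cons_self
  rcases hfeed with rfl | hfeed
  · omega
  · exact hwindow (c - j) (by omega) (by rwa [show j + (c - j) = c by omega])

theorem eq_sub_one_of_isPeakVal (hD : 2 ≤ D) (hτ : Stable D τ) (hs : Legal D (addGrain τ) s)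
    {p : ℕ} (hpeak : IsPeakVal s p) (hpD : D ≤ p + 1) : τ p = D - 1 := by
  obtain ⟨u, v, h, hu⟩ := isPeakVal_iff_exists_eq_append.1 hpeak
  have hlegu := legal_of_eq_append hs h
  have hfire := le_applyStrat_of_eq_append hs h
  rw [applyStrat_addGrain_of_not_mem hD hlegu (fun hp => (hu p hp).false) (by omega) hpD,
    List.count_eq_zero.2 fun hp => by have := hu _ hp; omega] at hfire
  have := List.nodup_iff_count_le_one.1 (nodup_of_legal hD hτ hlegu) (p + 1 - D)
  have := hτ p
  omega

theorem mem_of_eq_sub_one (hD : 2 ≤ D) (hs : Legal D (addGrain τ) s)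
    (hfin : Stable D (applyStrat D (addGrain τ) s)) {p : ℕ} (hpD : D ≤ p + 1)
    (hτp : τ p = D - 1) (hfed : p + 1 - D ∈ s) : p ∈ s := by
  by_contra hps
  have h := applyStrat_addGrain_of_not_mem hD hs hps (by omega) hpD
  have := List.count_pos_iff.2 hfed
  have := hfin p
  omega

theorem not_mem_of_eq_sub_one (hD : 2 ≤ D) (hτ' : Stable D τ') (hs : IsAvalancheFor D τ τ' s)
    {b p : ℕ} (h : s = u ++ b :: v) (hu : ∀ x ∈ u, x < p) (hpb : p < b) (hpD : D ≤ p + 1)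
    (hτp : τ p = D - 1) : p + 1 - D ∉ u := by
  intro hzu
  have hlt := applyStrat_lt_of_lt hτ' hs h hpb
  rw [applyStrat_addGrain_of_not_mem hD (legal_of_eq_append hs.1 h)
    (fun hp => (hu p hp).false) (by omega) hpD,
    List.count_eq_zero.2 fun hp => by have := hu _ hp; omega] at hlt
  have := List.count_pos_iff.2 hzu
  omega

theorem isPeakVal_of_eq_sub_one (hD : 2 ≤ D) (hτ : Stable D τ) (hτ' : Stable D τ')
    (hs : IsAvalancheFor D τ τ' s) {p : ℕ} (hpD : D ≤ p + 1) (hτp : τ p = D - 1)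
    (hfed : p + 1 - D ∈ s) : IsPeakVal s p := by
  have hp := mem_of_eq_sub_one hD hs.1 (hs.2.1 ▸ hτ') hpD hτp hfed
  obtain ⟨u, b, w, h, hpb, hu⟩ := exists_eq_append_and_forall_not (P := (p ≤ ·)) ⟨p, hp, le_rfl⟩
  simp only [not_le] at hu
  rcases hpb.eq_or_lt with rfl | hpb
  · exact isPeakVal_iff_exists_eq_append.2 ⟨u, w, h, hu⟩
  exfalso
  have hpw : p ∈ w := by
    rw [h, List.mem_append, List.mem_cons] at hp
    exact (hp.resolve_left fun hpu => (hu p hpu).false).resolve_left hpb.ne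
  obtain ⟨w₁, w₂, rfl⟩ := List.append_of_mem hpw
  have h' : s = u ++ b :: w₁ ++ p :: w₂ := by simpa using h
  have hpw₁ : p ∉ w₁ := fun hpw₁ =>
    not_mem_of_nodup_of_eq_append (nodup_of_legal hD hτ hs.1) h' (by simp [hpw₁])
  have hw₁ := le_of_mem_of_not_mem hD hτ hτ' hs h' hpb hpw₁
  have hzu := not_mem_of_eq_sub_one hD hτ' hs h hu hpb hpD hτp
  have hw₂ : ∀ x ∈ w₂, p < x + (D - 1) := by
    have := pairwise_lt_add hD hτ hτ' hs
    rw [h', List.pairwise_append, List.pairwise_cons] at this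
    exact this.2.1.1
  rw [h'] at hfed
  simp only [List.mem_append, List.mem_cons] at hfed
  rcases hfed with ((hzu' | hzb | hzw₁) | hzp | hzw₂)
  · exact hzu hzu'
  · omega
  · have := hw₁ _ hzw₁
    omega
  · omega
  · have := hw₂ _ hzw₂
    omega

end KSPM

theorem peak_characterization_general (D k l pq : ℕ) (hD : 2 ≤ D)
    (s : List ℕ) (τ τ' : ℕ → ℕ) (hτ : IsPi D (k - 1) τ) (hτ' : IsPi D k τ')
    (hav : IsAvalancheFor D τ τ' s)
    (hl : ∀ i : ℕ, l ≤ i → i < l + D - 1 → i ∈ s)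
    (hpq : IsPeakVal s pq) (hpqmax : ∀ p : ℕ, IsPeakVal s p → p ≤ pq) :
    ∀ p : ℕ, l + D - 1 ≤ p →
      (IsPeakVal s p ↔ (p ≤ pq + D - 1 ∧ τ p = D - 1)) := by
  intro p hp
  constructor
  · intro hpeak
    have := hpqmax p hpeak
    exact ⟨by omega, KSPM.eq_sub_one_of_isPeakVal hD hτ.2 hav.1 hpeak (by omega)⟩
  · rintro ⟨hppq, hτp⟩
    obtain ⟨u, v, hpq_eq, -⟩ := KSPM.isPeakVal_iff_exists_eq_append.1 hpq
    have hpq_mem : pq ∈ s := by simp [hpq_eq]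
    have hfed : p + 1 - D ∈ s := KSPM.mem_of_le_of_le hD hτ.2 hav.1 (hav.2.1 ▸ hτ'.2) hl
      hpq_mem _ (by omega) (by omega)
    exact KSPM.isPeakVal_of_eq_sub_one hD hτ.2 hτ'.2 hav (by omega) hτp hfed

/-- Beyond a block l,…,l+D-2 of fired columns, the peaks of the avalanche are exactly
the columns p ≤ p_q + D - 1 with π(k-1)_p = D - 1, where p_q is the greatest peak. -/
theorem peak_characterization (D k l pq : ℕ) (hD : 2 ≤ D) (hk : 1 ≤ k)
    (s : List ℕ) (τ τ' : ℕ → ℕ) (hτ : IsPi D (k - 1) τ) (hτ' : IsPi D k τ')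
    (hav : IsAvalancheFor D τ τ' s)
    (hl : ∀ i : ℕ, l ≤ i → i < l + D - 1 → i ∈ s)
    (hpq : IsPeakVal s pq) (hpqmax : ∀ p : ℕ, IsPeakVal s p → p ≤ pq) :
    ∀ p : ℕ, l + D - 1 ≤ p →
      (IsPeakVal s p ↔ (p ≤ pq + D - 1 ∧ τ p = D - 1)) :=
  peak_characterization_general D k l pq hD s τ τ' hτ hτ' hav hl hpq hpqmax
end
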